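/- Subtree ordering of optimal trees: if T* is a minimum-sum-energy tree among all trees with N leaves and sum depth ν (over the M-ASK alphabet), and T_j denotes the subtree rooted at the j-th child of the root with N_j leaves, then N_1 ≥ N_2 ≥ ... ≥ N_J; i.e., subtree sizes are non-increasing in the edge index. -/

import Mathlib

/-- Ordered rooted trees: a node with a (possibly empty) ordered list of children. -/
inductive RTree where
  | node : List RTree → RTree

mutual
  /-- The list of depths of all leaves of the tree (in left-to-right order). -/
  def RTree.leafDepths : RTree → List ℕ
    | .node [] => [0]
    | .node (c :: cs) => RTree.leafDepthsAux (c :: cs)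
  /-- Leaf depths of a forest, viewed as the children of a common root. -/
  def RTree.leafDepthsAux : List RTree → List ℕ
    | [] => []
    | t :: ts => (RTree.leafDepths t).map (· + 1) ++ RTree.leafDepthsAux ts
end

/-- Number of leaves. -/
def RTree.numLeaves (t : RTree) : ℕ := t.leafDepths.length

/-- Height: the maximum leaf depth. -/
def RTree.height (t : RTree) : ℕ := t.leafDepths.foldr max 0

/-- Sum depth: total of all leaf depths. -/
def RTree.sumDepth (t : RTree) : ℕ := t.leafDepths.sum

mutual
  /-- Energies of all leaves over the M-ASK alphabet: the `j`-th edge (0-based)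
  from any node carries symbol `2j+1` of energy `(2j+1)²`, and a leaf's energy is
  the sum of squared symbols along its root-to-leaf path. -/
  def RTree.leafEnergies : RTree → List ℕ
    | .node [] => [0]
    | .node (c :: cs) => RTree.leafEnergiesAux 0 (c :: cs)
  def RTree.leafEnergiesAux : ℕ → List RTree → List ℕ
    | _, [] => []
    | j, t :: ts => (RTree.leafEnergies t).map (· + (2 * j + 1) ^ 2)
        ++ RTree.leafEnergiesAux (j + 1) ts
end

/-- Sum energy: total of all leaf energies. -/
def RTree.sumEnergy (t : RTree) : ℕ := t.leafEnergies.sum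

/-- Every node has at most `M` children. -/
inductive RTree.MaxDeg (M : ℕ) : RTree → Prop
  | node (cs : List RTree) (hlen : cs.length ≤ M)
      (hc : ∀ t ∈ cs, RTree.MaxDeg M t) : RTree.MaxDeg M (.node cs)

/-- A `2⁺`-tree: every internal (non-leaf) node has at least two children. -/
inductive RTree.MinDeg2 : RTree → Prop
  | node (cs : List RTree) (hlen : cs.length ≠ 1)
      (hc : ∀ t ∈ cs, RTree.MinDeg2 t) : RTree.MinDeg2 (.node cs)

/-- Full binary trees: every internal node has exactly two ordered children. -/
inductive RTree.FullBin : RTree → Prop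
  | leaf : RTree.FullBin (.node [])
  | node (a b : RTree) : RTree.FullBin a → RTree.FullBin b →
      RTree.FullBin (.node [a, b])

/-! Exchanging the children at positions `i < j` of the root keeps the number of leaves and
the sum depth, and changes the sum energy by `((2i+1)² - (2j+1)²) (N_j - N_i)`. Since the
edge energies increase strictly with the position, an optimal tree cannot have `N_i < N_j`. -/

theorem List.exists_eq_append_getElem_cons_append_getElem_cons {α : Type*} (l : List α)
    {i j : ℕ} (hij : i < j) (hj : j < l.length) :
    ∃ l₁ l₂ l₃ : List α, l = l₁ ++ l[i] :: (l₂ ++ l[j] :: l₃) := by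
  have hi : i < l.length := hij.trans hj
  refine ⟨l.take i, (l.drop (i + 1)).take (j - (i + 1)), l.drop (j + 1), ?_⟩
  conv_lhs => rw [← List.take_append_drop i l, List.drop_eq_getElem_cons hi,
    ← List.take_append_drop (j - (i + 1)) (l.drop (i + 1)), List.drop_drop,
    show i + 1 + (j - (i + 1)) = j by omega, List.drop_eq_getElem_cons hj]

namespace RTree

theorem leafDepths_node {cs : List RTree} (h : cs ≠ []) :
    (node cs).leafDepths = leafDepthsAux cs := by
  cases cs with
  | nil => exact absurd rfl h
  | cons c cs => rfl

theorem leafEnergies_node {cs : List RTree} (h : cs ≠ []) :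
    (node cs).leafEnergies = leafEnergiesAux 0 cs := by
  cases cs with
  | nil => exact absurd rfl h
  | cons c cs => rfl

mutual
theorem length_leafEnergies : ∀ t : RTree, t.leafEnergies.length = t.numLeaves
  | .node [] => rfl
  | .node (c :: cs) => length_leafEnergiesAux 0 (c :: cs)
theorem length_leafEnergiesAux : ∀ (j : ℕ) (ts : List RTree),
    (leafEnergiesAux j ts).length = (leafDepthsAux ts).length
  | _, [] => rfl
  | j, t :: ts => by
      simp [leafEnergiesAux, leafDepthsAux, length_leafEnergies t,
        length_leafEnergiesAux (j + 1) ts, numLeaves]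
end

theorem length_leafDepthsAux (ts : List RTree) :
    (leafDepthsAux ts).length = (ts.map numLeaves).sum := by
  induction ts with
  | nil => rfl
  | cons t ts ih => simp [leafDepthsAux, ih, numLeaves]

theorem sum_leafDepthsAux (ts : List RTree) :
    (leafDepthsAux ts).sum = (ts.map fun t => t.sumDepth + t.numLeaves).sum := by
  induction ts with
  | nil => rfl
  | cons t ts ih => simp [leafDepthsAux, ih, List.sum_map_add, sumDepth, numLeaves]

theorem numLeaves_node {cs : List RTree} (h : cs ≠ []) :
    (node cs).numLeaves = (cs.map numLeaves).sum := by
  rw [numLeaves, leafDepths_node h, length_leafDepthsAux]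

theorem sumDepth_node {cs : List RTree} (h : cs ≠ []) :
    (node cs).sumDepth = (cs.map fun t => t.sumDepth + t.numLeaves).sum := by
  rw [sumDepth, leafDepths_node h, sum_leafDepthsAux]

theorem sum_leafEnergiesAux_append_cons (j : ℕ) (l : List RTree) (t : RTree)
    (ts : List RTree) :
    (leafEnergiesAux j (l ++ t :: ts)).sum = (leafEnergiesAux j l).sum + t.sumEnergy +
      (2 * (j + l.length) + 1) ^ 2 * t.numLeaves +
      (leafEnergiesAux (j + l.length + 1) ts).sum := by
  induction l generalizing j with
  | nil => simp [leafEnergiesAux, List.sum_map_add, sumEnergy, length_leafEnergies]; ring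
  | cons s l ih =>
    simp only [List.cons_append, leafEnergiesAux, List.sum_append, ih, List.length_cons]
    rw [show j + 1 + l.length = j + (l.length + 1) by omega]
    ring

section Exchange

variable (l₁ l₂ l₃ : List RTree) (a b : RTree)

theorem numLeaves_node_exchange :
    (node (l₁ ++ b :: (l₂ ++ a :: l₃))).numLeaves =
      (node (l₁ ++ a :: (l₂ ++ b :: l₃))).numLeaves := by
  simp only [numLeaves_node 
      (List.append_ne_nil_of_right_ne_nil _ (List.cons_ne_nil _ _)),
    List.map_append, List.map_cons, List.sum_append, List.sum_cons]
  omega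

theorem sumDepth_node_exchange :
    (node (l₁ ++ b :: (l₂ ++ a :: l₃))).sumDepth =
      (node (l₁ ++ a :: (l₂ ++ b :: l₃))).sumDepth := by
  simp only [sumDepth_node 
      (List.append_ne_nil_of_right_ne_nil _ (List.cons_ne_nil _ _)),
    List.map_append, List.map_cons, List.sum_append, List.sum_cons]
  omega

theorem sumEnergy_node_exchange :
    ((node (l₁ ++ b :: (l₂ ++ a :: l₃))).sumEnergy : ℤ) =
      (node (l₁ ++ a :: (l₂ ++ b :: l₃))).sumEnergy +
        ((2 * l₁.length + 1) ^ 2 - (2 * (l₁.length + 1 + l₂.length) + 1) ^ 2) *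
          ((b.numLeaves : ℤ) - a.numLeaves) := by
  simp only [sumEnergy, leafEnergies_node 
      (List.append_ne_nil_of_right_ne_nil _ (List.cons_ne_nil _ _)),
    sum_leafEnergiesAux_append_cons, zero_add]
  push_cast
  ring

end Exchange

end RTree

/-- Subtree ordering of optimal trees. If `T* = node cs` is a
minimum-sum-energy tree among all trees with the same number of leaves and sum
depth, then the numbers of leaves of the subtrees rooted at the children of the
root are non-increasing in the edge index. -/
theorem optimal_tree_subtree_sizes_nonincreasing (cs : List RTree)
    (hopt : ∀ t' : RTree, t'.numLeaves = (RTree.node cs).numLeaves →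
        t'.sumDepth = (RTree.node cs).sumDepth →
        (RTree.node cs).sumEnergy ≤ t'.sumEnergy)
    (i j : ℕ) (hij : i < j) (hj : j < cs.length) :
    (cs.get ⟨j, hj⟩).numLeaves ≤ (cs.get ⟨i, hij.trans hj⟩).numLeaves := by
  obtain ⟨l₁, l₂, l₃, hcs⟩ :=
    List.exists_eq_append_getElem_cons_append_getElem_cons cs hij hj
  simp only [List.get_eq_getElem]
  set a := cs[i]
  set b := cs[j]
  rw [hcs] at hopt
  have hle := hopt _ (RTree.numLeaves_node_exchange l₁ l₂ l₃ a b)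
    (RTree.sumDepth_node_exchange l₁ l₂ l₃ a b)
  have hexch := RTree.sumEnergy_node_exchange l₁ l₂ l₃ a b
  have hpos :
      ((2 * l₁.length + 1) ^ 2 : ℤ) < (2 * (l₁.length + 1 + l₂.length) + 1) ^ 2 := by
    gcongr
    omega
  by_contra! hlt
  have : (0 : ℤ) < (b.numLeaves : ℤ) - a.numLeaves := by omega
  nlinarith
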